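/- Suppose B̃₁₂, B̃₁₃, B̃₂₃ : U → ℝ are smooth on a neighborhood U of 0 in ℝ³ (coordinates (r,s,t)) with B̃₁₂(0,s,0) = 0 for all s, and satisfy the closedness condition ∂_t B̃₁₂ − ∂_s B̃₁₃ + ∂_r B̃₂₃ = 0. Define Ã₁(r,s,t) = −∫₀^t B̃₁₃(r,s,τ)dτ, Ã₂(r,s,t) = −∫₀^t B̃₂₃(r,s,τ)dτ + ∫₀^r B̃₁₂(ρ,s,0)dρ, Ã₃ = 0. Then ∂_r Ã₂ − ∂_s Ã₁ = B̃₁₂, ∂_r Ã₃ − ∂_t Ã₁ = B̃₁₃, ∂_s Ã₃ − ∂_t Ã₂ = B̃₂₃, and there exists a constant C with |Ã(r,s,t)| ≤ C(r² + |t|) on a compact neighborhood of 0. -/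

import Mathlib

open intervalIntegral

open intervalIntegral MeasureTheory Metric Set

namespace Gauge15

lemma norm3 (a b c : ℝ) : ‖((a, b, c) : ℝ × ℝ × ℝ)‖ = |a| ⊔ (|b| ⊔ |c|) := by
  simp [Prod.norm_def, Real.norm_eq_abs]

lemma norm3_le {a b c A : ℝ} (ha : |a| ≤ A) (hb : |b| ≤ A) (hc : |c| ≤ A) :
    ‖((a, b, c) : ℝ × ℝ × ℝ)‖ ≤ A := by
  rw [norm3]; exact max_le ha (max_le hb hc)

lemma abs1 (x : ℝ × ℝ × ℝ) : |x.1| ≤ ‖x‖ := (Real.norm_eq_abs _) ▸ norm_fst_le x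

lemma abs2 (x : ℝ × ℝ × ℝ) : |x.2.1| ≤ ‖x‖ :=
  le_trans ((Real.norm_eq_abs _) ▸ norm_fst_le x.2) (norm_snd_le x)

lemma abs3 (x : ℝ × ℝ × ℝ) : |x.2.2| ≤ ‖x‖ :=
  le_trans ((Real.norm_eq_abs _) ▸ norm_snd_le x.2) (norm_snd_le x)

lemma abs_sub_le_uIcc {a b τ : ℝ} (h : τ ∈ Set.uIcc a b) : |τ - a| ≤ |b - a| := by
  rcases Set.mem_uIcc.mp h with ⟨h1, h2⟩ | ⟨h1, h2⟩ <;>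
    rw [abs_le] <;> constructor <;>
      nlinarith [le_abs_self (b - a), neg_abs_le (b - a)]

lemma abs_le_uIcc {b τ : ℝ} (h : τ ∈ Set.uIcc 0 b) : |τ| ≤ |b| := by
  simpa using abs_sub_le_uIcc h

lemma abs_le_uIcc' {a b τ : ℝ} (h : τ ∈ Set.uIcc a b) : |τ| ≤ max |a| |b| := by
  rcases Set.mem_uIcc.mp h with ⟨h1, h2⟩ | ⟨h1, h2⟩ <;> rw [abs_le] <;> constructor <;>
    [linarith [neg_abs_le a, le_max_left |a| |b|];
     linarith [le_abs_self b, le_max_right |a| |b|];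
     linarith [neg_abs_le b, le_max_right |a| |b|];
     linarith [le_abs_self a, le_max_left |a| |b|]]

/-- Joint differentiability of a parametric interval integral with moving endpoint. -/
lemma genDeriv (f : ℝ × ℝ × ℝ → ℝ) (U : Set (ℝ × ℝ × ℝ)) (hU : IsOpen U)
    (hf : ContDiffOn ℝ (⊤ : ℕ∞) f U) (ε : ℝ) (hε : 0 < ε)
    (hK : closedBall (0 : ℝ × ℝ × ℝ) (2 * ε) ⊆ U)
    (J : ℝ × ℝ × ℝ →L[ℝ] ℝ × ℝ × ℝ) (e : ℝ × ℝ × ℝ →L[ℝ] ℝ) (w : ℝ × ℝ × ℝ)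
    (hJc : ∀ (x : ℝ × ℝ × ℝ) (τ : ℝ), ‖J x + τ • w‖ ≤ max ‖x‖ |τ|)
    (he : ∀ x : ℝ × ℝ × ℝ, |e x| ≤ ‖x‖)
    (x₀ : ℝ × ℝ × ℝ) (hx₀ : x₀ ∈ ball (0 : ℝ × ℝ × ℝ) ε) :
    IntervalIntegrable (fun τ => (fderiv ℝ f (J x₀ + τ • w)).comp J) volume 0 (e x₀) ∧
    HasFDerivAt (fun x : ℝ × ℝ × ℝ => ∫ τ in (0:ℝ)..(e x), f (J x + τ • w))
      ((∫ τ in (0:ℝ)..(e x₀), (fderiv ℝ f (J x₀ + τ • w)).comp J) +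
        f (J x₀ + e x₀ • w) • e) x₀ := by
  have hxn : ‖x₀‖ < ε := mem_ball_zero_iff.mp hx₀
  have hcont : ContinuousOn f U := hf.continuousOn
  have hfd : ContinuousOn (fderiv ℝ f) U := hf.continuousOn_fderiv_of_isOpen hU (by simp)
  obtain ⟨M, hM⟩ :=
    (isCompact_closedBall (0 : ℝ × ℝ × ℝ) (2 * ε)).exists_bound_of_continuousOn (hfd.mono hK)
  set t₀ := e x₀ with ht₀
  have habs_t₀ : |t₀| < ε := lt_of_le_of_lt (he x₀) hxn
  -- membership
  have hmem : ∀ x : ℝ × ℝ × ℝ, ‖x - x₀‖ < ε → ∀ τ : ℝ, |τ| ≤ 2 * ε →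
      (J x + τ • w) ∈ closedBall (0 : ℝ × ℝ × ℝ) (2 * ε) := by
    intro x hx τ hτ
    rw [mem_closedBall_zero_iff]
    refine (hJc x τ).trans (max_le ?_ hτ)
    have := norm_sub_norm_le x x₀
    linarith
  have hder : ∀ z ∈ closedBall (0 : ℝ × ℝ × ℝ) (2 * ε), HasFDerivAt f (fderiv ℝ f z) z :=
    fun z hz => ((hf.differentiableOn (by simp)).differentiableAt (hU.mem_nhds (hK hz))).hasFDerivAt
  have hinner : ∀ x : ℝ × ℝ × ℝ, Continuous (fun τ : ℝ => J x + τ • w) :=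
    fun x => continuous_const.add (continuous_id.smul continuous_const)
  have hcomp : ∀ x : ℝ × ℝ × ℝ, ‖x - x₀‖ < ε → ∀ a b : ℝ, |a| ≤ 2 * ε → |b| ≤ 2 * ε →
      ContinuousOn (fun τ => f (J x + τ • w)) (uIcc a b) := by
    intro x hx a b ha hb
    refine ContinuousOn.comp hcont ((hinner x).continuousOn) ?_
    intro τ hτ
    exact hK (hmem x hx τ ((abs_le_uIcc' hτ).trans (max_le ha hb)))
  have hx₀x₀ : ‖x₀ - x₀‖ < ε := by simpa using hε
  have h0e : |(0:ℝ)| ≤ 2 * ε := by rw [abs_zero]; positivity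
  have ht₀e : |t₀| ≤ 2 * ε := by linarith
  have hF'cont : ∀ x : ℝ × ℝ × ℝ, ‖x - x₀‖ < ε → ∀ a b : ℝ, |a| ≤ 2 * ε → |b| ≤ 2 * ε →
      ContinuousOn (fun τ => (fderiv ℝ f (J x + τ • w)).comp J) (uIcc a b) := by
    intro x hx a b ha hb
    refine ContinuousOn.clm_comp ?_ continuousOn_const
    refine ContinuousOn.comp (hfd.mono hK) ((hinner x).continuousOn) ?_
    intro τ hτ
    exact hmem x hx τ ((abs_le_uIcc' hτ).trans (max_le ha hb))
  have hint1 : IntervalIntegrable (fun τ => (fderiv ℝ f (J x₀ + τ • w)).comp J) volume 0 t₀ :=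
    (hF'cont x₀ hx₀x₀ 0 t₀ h0e ht₀e).intervalIntegrable
  refine ⟨hint1, ?_⟩
  -- Step 1 : fixed endpoint, parametric differentiation
  have step1 : HasFDerivAt (fun x : ℝ × ℝ × ℝ => ∫ τ in (0:ℝ)..t₀, f (J x + τ • w))
      (∫ τ in (0:ℝ)..t₀, (fderiv ℝ f (J x₀ + τ • w)).comp J) x₀ := by
    apply intervalIntegral.hasFDerivAt_integral_of_dominated_of_fderiv_le
      (F' := fun x τ => (fderiv ℝ f (J x + τ • w)).comp J) (bound := fun _ => M * ‖J‖) (ball_mem_nhds x₀ hε)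
    · filter_upwards [ball_mem_nhds x₀ hε] with x hx
      exact ((hcomp x (mem_ball_iff_norm.mp hx) 0 t₀ h0e ht₀e).mono
        uIoc_subset_uIcc).aestronglyMeasurable measurableSet_uIoc
    · exact (hcomp x₀ hx₀x₀ 0 t₀ h0e ht₀e).intervalIntegrable
    · exact ((hF'cont x₀ hx₀x₀ 0 t₀ h0e ht₀e).mono
        uIoc_subset_uIcc).aestronglyMeasurable measurableSet_uIoc
    · refine Filter.Eventually.of_forall fun τ hτ x hx => ?_
      have hz : (J x + τ • w) ∈ closedBall (0 : ℝ × ℝ × ℝ) (2 * ε) :=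
        hmem x (mem_ball_iff_norm.mp hx) τ
          ((abs_le_uIcc' (uIoc_subset_uIcc hτ)).trans (max_le h0e ht₀e))
      exact (ContinuousLinearMap.opNorm_comp_le _ _).trans
        (mul_le_mul_of_nonneg_right (hM _ hz) (norm_nonneg J))
    · exact intervalIntegrable_const
    · refine Filter.Eventually.of_forall fun τ hτ x hx => ?_
      have hz : (J x + τ • w) ∈ closedBall (0 : ℝ × ℝ × ℝ) (2 * ε) :=
        hmem x (mem_ball_iff_norm.mp hx) τ
          ((abs_le_uIcc' (uIoc_subset_uIcc hτ)).trans (max_le h0e ht₀e))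
      exact (hder _ hz).comp x (J.hasFDerivAt.add_const (τ • w))
  -- Step 2 : moving endpoint
  have step2 : HasFDerivAt (fun x : ℝ × ℝ × ℝ => ∫ τ in t₀..(e x), f (J x + τ • w))
      (f (J x₀ + t₀ • w) • e) x₀ := by
    rw [hasFDerivAt_iff_isLittleO_nhds_zero, Asymptotics.isLittleO_iff]
    intro c hc
    have hz₀ : (J x₀ + t₀ • w) ∈ closedBall (0 : ℝ × ℝ × ℝ) (2 * ε) :=
      hmem x₀ hx₀x₀ t₀ ht₀e
    have hca : ContinuousAt f (J x₀ + t₀ • w) := hcont.continuousAt (hU.mem_nhds (hK hz₀))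
    obtain ⟨η, hη0, hηc⟩ := Metric.continuousAt_iff.mp hca c hc
    have hδ : (0:ℝ) < min η ε := lt_min hη0 hε
    filter_upwards [ball_mem_nhds (0 : ℝ × ℝ × ℝ) hδ] with v hv
    have hvn : ‖v‖ < min η ε := mem_ball_zero_iff.mp hv
    have hvsub : ‖x₀ + v - x₀‖ < ε := by
      simpa using lt_of_lt_of_le hvn (min_le_right _ _)
    have hev : |e v| ≤ ‖v‖ := he v
    have hex : e (x₀ + v) = t₀ + e v := by rw [map_add]
    have hexe : |e (x₀ + v)| ≤ 2 * ε := by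
      rw [hex]
      calc |t₀ + e v| ≤ |t₀| + |e v| := abs_add_le _ _
      _ ≤ 2 * ε := by
          have := lt_of_lt_of_le hvn (min_le_right _ _); linarith
    -- integrability of integrand
    have hci : ContinuousOn (fun τ => f (J (x₀ + v) + τ • w)) (uIcc t₀ (e (x₀ + v))) :=
      hcomp (x₀ + v) hvsub t₀ (e (x₀ + v)) ht₀e hexe
    have hii : IntervalIntegrable (fun τ => f (J (x₀ + v) + τ • w)) volume t₀ (e (x₀ + v)) :=
      hci.intervalIntegrable
    -- pointwise bound
    have hbd : ∀ τ ∈ Set.uIoc t₀ (e (x₀ + v)),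
        ‖f (J (x₀ + v) + τ • w) - f (J x₀ + t₀ • w)‖ ≤ c := by
      intro τ hτ
      have h1 : |τ - t₀| ≤ |e v| := by
        have := abs_sub_le_uIcc (uIoc_subset_uIcc hτ)
        rw [hex] at this; simpa using this
      have hdist : dist (J (x₀ + v) + τ • w) (J x₀ + t₀ • w) < η := by
        rw [dist_eq_norm]
        have heq2 : J (x₀ + v) + τ • w - (J x₀ + t₀ • w) = J v + (τ - t₀) • w := by
          rw [map_add, sub_smul]; abel
        rw [heq2]
        refine lt_of_le_of_lt ((hJc v (τ - t₀)).trans (max_le le_rfl ?_)) ?_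
        · exact h1.trans hev
        · exact lt_of_lt_of_le hvn (min_le_left _ _)
      have := (hηc hdist).le
      rwa [Real.dist_eq] at this
    -- main estimate
    have key : (∫ τ in t₀..(e (x₀ + v)), f (J (x₀ + v) + τ • w)) -
        f (J x₀ + t₀ • w) * e v =
        ∫ τ in t₀..(e (x₀ + v)), (f (J (x₀ + v) + τ • w) - f (J x₀ + t₀ • w)) := by
      rw [intervalIntegral.integral_sub hii intervalIntegrable_const,
        intervalIntegral.integral_const, hex]
      simp [smul_eq_mul]; ring
    have hnorm : ‖(∫ τ in t₀..(e (x₀ + v)), f (J (x₀ + v) + τ • w)) -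
        f (J x₀ + t₀ • w) * e v‖ ≤ c * ‖v‖ := by
      rw [key]
      refine (intervalIntegral.norm_integral_le_of_norm_le_const hbd).trans ?_
      rw [hex]
      have : |t₀ + e v - t₀| = |e v| := by ring_nf
      rw [this]
      exact mul_le_mul_of_nonneg_left (hev) hc.le
    calc ‖(∫ τ in t₀..(e (x₀ + v)), f (J (x₀ + v) + τ • w)) -
          (∫ τ in t₀..(e x₀), f (J x₀ + τ • w)) - (f (J x₀ + t₀ • w) • e) v‖
        = ‖(∫ τ in t₀..(e (x₀ + v)), f (J (x₀ + v) + τ • w)) -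
          f (J x₀ + t₀ • w) * e v‖ := by
          rw [← ht₀, intervalIntegral.integral_same]
          simp [smul_eq_mul]
      _ ≤ c * ‖v‖ := hnorm
  -- combine
  have heqn : (fun x : ℝ × ℝ × ℝ => ∫ τ in (0:ℝ)..(e x), f (J x + τ • w)) =ᶠ[nhds x₀]
      (fun x : ℝ × ℝ × ℝ => (∫ τ in (0:ℝ)..t₀, f (J x + τ • w)) +
        ∫ τ in t₀..(e x), f (J x + τ • w)) := by
    filter_upwards [ball_mem_nhds x₀ hε] with x hx
    have hx' : ‖x - x₀‖ < ε := mem_ball_iff_norm.mp hx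
    have hexe : |e x| ≤ 2 * ε := by
      have h1 := he x
      have h2 := norm_sub_norm_le x x₀
      linarith
    have h1 : IntervalIntegrable (fun τ => f (J x + τ • w)) volume 0 t₀ :=
      (hcomp x hx' 0 t₀ h0e ht₀e).intervalIntegrable
    have h2 : IntervalIntegrable (fun τ => f (J x + τ • w)) volume t₀ (e x) :=
      (hcomp x hx' t₀ (e x) ht₀e hexe).intervalIntegrable
    rw [intervalIntegral.integral_add_adjacent_intervals h1 h2]
  exact (step1.add step2).congr_of_eventuallyEq heqn

noncomputable def e3 : ℝ × ℝ × ℝ →L[ℝ] ℝ :=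
  (ContinuousLinearMap.snd ℝ ℝ ℝ).comp (ContinuousLinearMap.snd ℝ ℝ (ℝ × ℝ))

noncomputable def e1 : ℝ × ℝ × ℝ →L[ℝ] ℝ := ContinuousLinearMap.fst ℝ ℝ (ℝ × ℝ)

noncomputable def Jrs : ℝ × ℝ × ℝ →L[ℝ] ℝ × ℝ × ℝ :=
  (ContinuousLinearMap.fst ℝ ℝ (ℝ × ℝ)).prod
    (((ContinuousLinearMap.fst ℝ ℝ ℝ).comp (ContinuousLinearMap.snd ℝ ℝ (ℝ × ℝ))).prod 0)

noncomputable def Js : ℝ × ℝ × ℝ →L[ℝ] ℝ × ℝ × ℝ :=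
  (0 : ℝ × ℝ × ℝ →L[ℝ] ℝ).prod
    (((ContinuousLinearMap.fst ℝ ℝ ℝ).comp (ContinuousLinearMap.snd ℝ ℝ (ℝ × ℝ))).prod 0)

@[simp] lemma e3_apply (x : ℝ × ℝ × ℝ) : e3 x = x.2.2 := rfl
@[simp] lemma e1_apply (x : ℝ × ℝ × ℝ) : e1 x = x.1 := rfl
@[simp] lemma Jrs_apply (x : ℝ × ℝ × ℝ) : Jrs x = (x.1, x.2.1, 0) := rfl
@[simp] lemma Js_apply (x : ℝ × ℝ × ℝ) : Js x = (0, x.2.1, 0) := rfl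

@[simp] lemma Jrs_pt (x : ℝ × ℝ × ℝ) (τ : ℝ) :
    Jrs x + τ • ((0, 0, 1) : ℝ × ℝ × ℝ) = (x.1, x.2.1, τ) := by
  simp [Prod.ext_iff]

@[simp] lemma Js_pt (x : ℝ × ℝ × ℝ) (τ : ℝ) :
    Js x + τ • ((1, 0, 0) : ℝ × ℝ × ℝ) = (τ, x.2.1, 0) := by
  simp [Prod.ext_iff]

lemma hJc3 (x : ℝ × ℝ × ℝ) (τ : ℝ) :
    ‖Jrs x + τ • ((0, 0, 1) : ℝ × ℝ × ℝ)‖ ≤ max ‖x‖ |τ| := by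
  rw [Jrs_pt]
  exact norm3_le ((abs1 x).trans (le_max_left _ _)) ((abs2 x).trans (le_max_left _ _))
    (le_max_right _ _)

lemma hJc1 (x : ℝ × ℝ × ℝ) (τ : ℝ) :
    ‖Js x + τ • ((1, 0, 0) : ℝ × ℝ × ℝ)‖ ≤ max ‖x‖ |τ| := by
  rw [Js_pt]
  refine norm3_le (le_max_right _ _) ((abs2 x).trans (le_max_left _ _)) ?_
  simp only [abs_zero]
  exact le_max_of_le_left (norm_nonneg x)

lemma he3 (x : ℝ × ℝ × ℝ) : |e3 x| ≤ ‖x‖ := abs3 x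
lemma he1 (x : ℝ × ℝ × ℝ) : |e1 x| ≤ ‖x‖ := abs1 x

end Gauge15

open Gauge15 Metric Set MeasureTheory

/-- Explicit gauge construction: given a closed magnetic two-form with components
`B̃₁₂, B̃₁₃, B̃₂₃` smooth near `0` in coordinates `(r,s,t)`, with `B̃₁₂(0,s,0) = 0`, the
vector potential `Ã₁ = −∫₀^t B̃₁₃`, `Ã₂ = −∫₀^t B̃₂₃ + ∫₀^r B̃₁₂(·,s,0)`, `Ã₃ = 0`
satisfies `curl Ã = B̃` near `0` and `|Ã| ≤ C(r² + |t|)` near `0`. -/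
theorem statement15 (B12 B13 B23 : ℝ × ℝ × ℝ → ℝ) (U : Set (ℝ × ℝ × ℝ))
    (hU : IsOpen U) (h0U : (0, 0, 0) ∈ U)
    (hB12 : ContDiffOn ℝ (⊤ : ℕ∞) B12 U) (hB13 : ContDiffOn ℝ (⊤ : ℕ∞) B13 U)
    (hB23 : ContDiffOn ℝ (⊤ : ℕ∞) B23 U)
    (hvanish : ∀ s : ℝ, ((0 : ℝ), s, (0 : ℝ)) ∈ U → B12 (0, s, 0) = 0)
    (hclosed : ∀ x ∈ U,
      fderiv ℝ B12 x (0, 0, 1) - fderiv ℝ B13 x (0, 1, 0) + fderiv ℝ B23 x (1, 0, 0) = 0)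
    (A1 A2 : ℝ × ℝ × ℝ → ℝ)
    (hA1 : ∀ x : ℝ × ℝ × ℝ, A1 x = -∫ τ in (0 : ℝ)..x.2.2, B13 (x.1, x.2.1, τ))
    (hA2 : ∀ x : ℝ × ℝ × ℝ, A2 x = -(∫ τ in (0 : ℝ)..x.2.2, B23 (x.1, x.2.1, τ))
        + ∫ ρ in (0 : ℝ)..x.1, B12 (ρ, x.2.1, 0)) :
    ∃ V ⊆ U, IsOpen V ∧ (0, 0, 0) ∈ V ∧
      (∀ x ∈ V,
        fderiv ℝ A2 x (1, 0, 0) - fderiv ℝ A1 x (0, 1, 0) = B12 x ∧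
        -fderiv ℝ A1 x (0, 0, 1) = B13 x ∧
        -fderiv ℝ A2 x (0, 0, 1) = B23 x) ∧
      ∃ C > (0 : ℝ), ∀ x ∈ V, |A1 x| + |A2 x| ≤ C * (x.1 ^ 2 + |x.2.2|) := by
  obtain ⟨δ, hδ0, hδU⟩ := Metric.isOpen_iff.mp hU _ h0U
  set ε := δ / 4 with hεdef
  have hε : 0 < ε := by positivity
  have hK : closedBall (0 : ℝ × ℝ × ℝ) (2 * ε) ⊆ U := by
    intro z hz
    apply hδU
    rw [mem_closedBall] at hz
    rw [mem_ball]
    calc dist z (0, 0, 0) = dist z 0 := rfl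
    _ ≤ 2 * ε := hz
    _ < δ := by rw [hεdef]; linarith
  have hVU : ball (0 : ℝ × ℝ × ℝ) ε ⊆ U := fun z hz =>
    hK (closedBall_subset_closedBall (by linarith) (ball_subset_closedBall hz))
  refine ⟨ball (0 : ℝ × ℝ × ℝ) ε, hVU, isOpen_ball, mem_ball_self hε, ?_, ?_⟩
  · -- curl identities
    intro x hx
    have hxn : ‖x‖ < ε := mem_ball_zero_iff.mp hx
    have hsubC : ∀ τ ∈ Set.uIcc (0:ℝ) x.2.2,
        ((x.1, x.2.1, τ) : ℝ × ℝ × ℝ) ∈ closedBall (0 : ℝ × ℝ × ℝ) (2 * ε) := by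
      intro τ hτ
      rw [mem_closedBall_zero_iff]
      have h3 : |τ| ≤ ‖x‖ := (abs_le_uIcc hτ).trans (abs3 x)
      exact norm3_le (by linarith [abs1 x]) (by linarith [abs2 x]) (by linarith)
    have hsub : ∀ τ ∈ Set.uIcc (0:ℝ) x.2.2, ((x.1, x.2.1, τ) : ℝ × ℝ × ℝ) ∈ U :=
      fun τ hτ => hK (hsubC τ hτ)
    have hfd12 : ContinuousOn (fderiv ℝ B12) U := hB12.continuousOn_fderiv_of_isOpen hU (by simp)
    have hfd13 : ContinuousOn (fderiv ℝ B13) U := hB13.continuousOn_fderiv_of_isOpen hU (by simp)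
    have hfd23 : ContinuousOn (fderiv ℝ B23) U := hB23.continuousOn_fderiv_of_isOpen hU (by simp)
    have hline : Continuous (fun τ : ℝ => ((x.1, x.2.1, τ) : ℝ × ℝ × ℝ)) :=
      continuous_const.prodMk (continuous_const.prodMk continuous_id)
    have hI : ∀ g : ℝ × ℝ × ℝ → ℝ, ContinuousOn (fderiv ℝ g) U → ∀ v : ℝ × ℝ × ℝ,
        IntervalIntegrable (fun τ => fderiv ℝ g (x.1, x.2.1, τ) v) volume 0 x.2.2 := by
      intro g hg v
      apply ContinuousOn.intervalIntegrable
      exact (ContinuousOn.comp hg hline.continuousOn hsub).clm_apply continuousOn_const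
    have hG13 := genDeriv B13 U hU hB13 ε hε hK Jrs e3 (0, 0, 1) hJc3 he3 x hx
    have hG23 := genDeriv B23 U hU hB23 ε hε hK Jrs e3 (0, 0, 1) hJc3 he3 x hx
    have hGP := genDeriv B12 U hU hB12 ε hε hK Js e1 (1, 0, 0) hJc1 he1 x hx
    simp only [Jrs_pt, Js_pt, e3_apply, e1_apply, Prod.mk.eta] at hG13 hG23 hGP
    have hd1 : HasFDerivAt A1
        (-((∫ τ in (0:ℝ)..x.2.2, (fderiv ℝ B13 (x.1, x.2.1, τ)).comp Jrs) + B13 x • e3)) x :=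
      (hG13.2.neg).congr_of_eventuallyEq (Filter.Eventually.of_forall fun y => hA1 y)
    have hd2 : HasFDerivAt A2
        (-((∫ τ in (0:ℝ)..x.2.2, (fderiv ℝ B23 (x.1, x.2.1, τ)).comp Jrs) + B23 x • e3) +
          ((∫ ρ in (0:ℝ)..x.1, (fderiv ℝ B12 (ρ, x.2.1, 0)).comp Js) +
            B12 (x.1, x.2.1, 0) • e1)) x :=
      ((hG23.2.neg).add hGP.2).congr_of_eventuallyEq (Filter.Eventually.of_forall fun y => hA2 y)
    have hf1 := hd1.fderiv
    have hf2 := hd2.fderiv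
    have hA1s : fderiv ℝ A1 x ((0:ℝ), (1:ℝ), (0:ℝ)) =
        -(∫ τ in (0:ℝ)..x.2.2, fderiv ℝ B13 (x.1, x.2.1, τ) ((0:ℝ), (1:ℝ), (0:ℝ))) := by
      rw [hf1]
      simp only [ContinuousLinearMap.neg_apply, ContinuousLinearMap.add_apply,
        ContinuousLinearMap.smul_apply, e3_apply, smul_eq_mul]
      rw [ContinuousLinearMap.intervalIntegral_apply hG13.1 ((0:ℝ), (1:ℝ), (0:ℝ))]
      simp [ContinuousLinearMap.comp_apply, Prod.mk_zero_zero]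
    have hA1t : fderiv ℝ A1 x ((0:ℝ), (0:ℝ), (1:ℝ)) = -B13 x := by
      rw [hf1]
      simp only [ContinuousLinearMap.neg_apply, ContinuousLinearMap.add_apply,
        ContinuousLinearMap.smul_apply, e3_apply, smul_eq_mul]
      rw [ContinuousLinearMap.intervalIntegral_apply hG13.1 ((0:ℝ), (0:ℝ), (1:ℝ))]
      simp [ContinuousLinearMap.comp_apply, Prod.mk_zero_zero]
    have hA2r : fderiv ℝ A2 x ((1:ℝ), (0:ℝ), (0:ℝ)) =
        -(∫ τ in (0:ℝ)..x.2.2, fderiv ℝ B23 (x.1, x.2.1, τ) ((1:ℝ), (0:ℝ), (0:ℝ))) +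
          B12 (x.1, x.2.1, 0) := by
      rw [hf2]
      simp only [ContinuousLinearMap.add_apply, ContinuousLinearMap.neg_apply,
        ContinuousLinearMap.smul_apply, e3_apply, e1_apply, smul_eq_mul]
      rw [ContinuousLinearMap.intervalIntegral_apply hG23.1 ((1:ℝ), (0:ℝ), (0:ℝ)),
        ContinuousLinearMap.intervalIntegral_apply hGP.1 ((1:ℝ), (0:ℝ), (0:ℝ))]
      simp [ContinuousLinearMap.comp_apply, Prod.mk_zero_zero]
    have hA2t : fderiv ℝ A2 x ((0:ℝ), (0:ℝ), (1:ℝ)) = -B23 x := by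
      rw [hf2]
      simp only [ContinuousLinearMap.add_apply, ContinuousLinearMap.neg_apply,
        ContinuousLinearMap.smul_apply, e3_apply, e1_apply, smul_eq_mul]
      rw [ContinuousLinearMap.intervalIntegral_apply hG23.1 ((0:ℝ), (0:ℝ), (1:ℝ)),
        ContinuousLinearMap.intervalIntegral_apply hGP.1 ((0:ℝ), (0:ℝ), (1:ℝ))]
      simp [ContinuousLinearMap.comp_apply, Prod.mk_zero_zero]
    refine ⟨?_, by rw [hA1t]; ring, by rw [hA2t]; ring⟩
    rw [hA2r, hA1s]
    have hsplit : (∫ τ in (0:ℝ)..x.2.2, (fderiv ℝ B13 (x.1, x.2.1, τ) ((0:ℝ), (1:ℝ), (0:ℝ)) -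
        fderiv ℝ B23 (x.1, x.2.1, τ) ((1:ℝ), (0:ℝ), (0:ℝ)))) =
        (∫ τ in (0:ℝ)..x.2.2, fderiv ℝ B13 (x.1, x.2.1, τ) ((0:ℝ), (1:ℝ), (0:ℝ))) -
        ∫ τ in (0:ℝ)..x.2.2, fderiv ℝ B23 (x.1, x.2.1, τ) ((1:ℝ), (0:ℝ), (0:ℝ)) :=
      intervalIntegral.integral_sub (hI B13 hfd13 _) (hI B23 hfd23 _)
    have hcong : (∫ τ in (0:ℝ)..x.2.2, (fderiv ℝ B13 (x.1, x.2.1, τ) ((0:ℝ), (1:ℝ), (0:ℝ)) -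
        fderiv ℝ B23 (x.1, x.2.1, τ) ((1:ℝ), (0:ℝ), (0:ℝ)))) =
        ∫ τ in (0:ℝ)..x.2.2, fderiv ℝ B12 (x.1, x.2.1, τ) ((0:ℝ), (0:ℝ), (1:ℝ)) := by
      apply intervalIntegral.integral_congr
      intro τ hτ
      have := hclosed _ (hsub τ hτ)
      simp only
      linarith
    have hftc : (∫ τ in (0:ℝ)..x.2.2, fderiv ℝ B12 (x.1, x.2.1, τ) ((0:ℝ), (0:ℝ), (1:ℝ))) =
        B12 x - B12 (x.1, x.2.1, 0) := by
      have hh := intervalIntegral.integral_eq_sub_of_hasDerivAt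
        (f := fun u : ℝ => B12 (x.1, x.2.1, u))
        (f' := fun τ => fderiv ℝ B12 (x.1, x.2.1, τ) ((0:ℝ), (0:ℝ), (1:ℝ)))
        (a := 0) (b := x.2.2) ?_ (hI B12 hfd12 _)
      · rw [hh]
      · intro τ hτ
        have hBd : HasFDerivAt B12 (fderiv ℝ B12 (x.1, x.2.1, τ)) (x.1, x.2.1, τ) :=
          ((hB12.differentiableOn (by simp)).differentiableAt
            (hU.mem_nhds (hsub τ hτ))).hasFDerivAt
        exact hBd.comp_hasDerivAt τ
          ((hasDerivAt_const τ x.1).prodMk ((hasDerivAt_const τ x.2.1).prodMk (hasDerivAt_id τ)))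
    rw [hcong, hftc] at hsplit
    linarith
  · -- quadratic/linear bound
    obtain ⟨M13, hM13⟩ := (isCompact_closedBall (0 : ℝ × ℝ × ℝ) (2 * ε)).exists_bound_of_continuousOn
      (hB13.continuousOn.mono hK)
    obtain ⟨M23, hM23⟩ := (isCompact_closedBall (0 : ℝ × ℝ × ℝ) (2 * ε)).exists_bound_of_continuousOn
      (hB23.continuousOn.mono hK)
    obtain ⟨M12, hM12⟩ := (isCompact_closedBall (0 : ℝ × ℝ × ℝ) (2 * ε)).exists_bound_of_continuousOn
      ((hB12.continuousOn_fderiv_of_isOpen hU (by simp)).mono hK)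
    refine ⟨|M13| + |M23| + |M12| + 1, by positivity, ?_⟩
    intro x hx
    have hxn : ‖x‖ < ε := mem_ball_zero_iff.mp hx
    have hsubC : ∀ τ ∈ Set.uIcc (0:ℝ) x.2.2,
        ((x.1, x.2.1, τ) : ℝ × ℝ × ℝ) ∈ closedBall (0 : ℝ × ℝ × ℝ) (2 * ε) := by
      intro τ hτ
      rw [mem_closedBall_zero_iff]
      have h3 : |τ| ≤ ‖x‖ := (abs_le_uIcc hτ).trans (abs3 x)
      exact norm3_le (by linarith [abs1 x]) (by linarith [abs2 x]) (by linarith)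
    -- bound on A1
    have hbA1 : |A1 x| ≤ |M13| * |x.2.2| := by
      rw [hA1 x, abs_neg, ← Real.norm_eq_abs]
      have := intervalIntegral.norm_integral_le_of_norm_le_const
        (C := |M13|) (f := fun τ => B13 (x.1, x.2.1, τ)) (a := 0) (b := x.2.2) ?_
      · simpa using this
      · intro τ hτ
        exact (hM13 _ (hsubC τ (uIoc_subset_uIcc hτ))).trans (le_abs_self M13)
    -- bound on A2 part 1
    have hbA21 : |∫ τ in (0:ℝ)..x.2.2, B23 (x.1, x.2.1, τ)| ≤ |M23| * |x.2.2| := by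
      rw [← Real.norm_eq_abs]
      have := intervalIntegral.norm_integral_le_of_norm_le_const
        (C := |M23|) (f := fun τ => B23 (x.1, x.2.1, τ)) (a := 0) (b := x.2.2) ?_
      · simpa using this
      · intro τ hτ
        exact (hM23 _ (hsubC τ (uIoc_subset_uIcc hτ))).trans (le_abs_self M23)
    -- MVT bound on B12 along t = 0
    have hmvt : ∀ ρ : ℝ, |ρ| ≤ ‖x‖ → |B12 (ρ, x.2.1, 0)| ≤ |M12| * |ρ| := by
      intro ρ hρ
      have h1 : ((0:ℝ), x.2.1, (0:ℝ)) ∈ closedBall (0 : ℝ × ℝ × ℝ) (2 * ε) := by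
        rw [mem_closedBall_zero_iff]
        exact norm3_le (by rw [abs_zero]; positivity) (by linarith [abs2 x])
          (by rw [abs_zero]; positivity)
      have h2 : ((ρ, x.2.1, (0:ℝ)) : ℝ × ℝ × ℝ) ∈ closedBall (0 : ℝ × ℝ × ℝ) (2 * ε) := by
        rw [mem_closedBall_zero_iff]
        exact norm3_le (by linarith) (by linarith [abs2 x]) (by rw [abs_zero]; positivity)
      have hv := hvanish x.2.1 (hK h1)
      have hdiff : ∀ z ∈ closedBall (0 : ℝ × ℝ × ℝ) (2 * ε), DifferentiableAt ℝ B12 z :=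
        fun z hz => (hB12.differentiableOn (by simp)).differentiableAt (hU.mem_nhds (hK hz))
      have hmv := Convex.norm_image_sub_le_of_norm_fderiv_le hdiff
        (fun z hz => (hM12 z hz).trans (le_abs_self M12))
        (convex_closedBall _ _) h1 h2
      rw [hv, sub_zero, Real.norm_eq_abs] at hmv
      refine hmv.trans ?_
      have : ‖((ρ, x.2.1, (0:ℝ)) : ℝ × ℝ × ℝ) - ((0:ℝ), x.2.1, (0:ℝ))‖ = |ρ| := by
        have : ((ρ, x.2.1, (0:ℝ)) : ℝ × ℝ × ℝ) - ((0:ℝ), x.2.1, (0:ℝ)) = (ρ, 0, 0) := by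
          simp [Prod.ext_iff]
        rw [this, norm3]
        simp
      rw [this]
    -- bound on A2 part 2
    have hbA22 : |∫ ρ in (0:ℝ)..x.1, B12 (ρ, x.2.1, 0)| ≤ |M12| * |x.1| * |x.1| := by
      rw [← Real.norm_eq_abs]
      have := intervalIntegral.norm_integral_le_of_norm_le_const
        (C := |M12| * |x.1|) (f := fun ρ => B12 (ρ, x.2.1, 0)) (a := 0) (b := x.1) ?_
      · simpa using this
      · intro ρ hρ
        have hρ1 : |ρ| ≤ |x.1| := abs_le_uIcc (uIoc_subset_uIcc hρ)
        rw [Real.norm_eq_abs]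
        exact (hmvt ρ (hρ1.trans (abs1 x))).trans
          (mul_le_mul_of_nonneg_left hρ1 (abs_nonneg M12))
    have hbA2 : |A2 x| ≤ |M23| * |x.2.2| + |M12| * |x.1| * |x.1| := by
      rw [hA2 x]
      refine (abs_add_le _ _).trans ?_
      rw [abs_neg]
      exact add_le_add hbA21 hbA22
    have hrr : |x.1| * |x.1| = x.1 ^ 2 := by
      rw [pow_two]; exact abs_mul_abs_self x.1
    nlinarith [abs_nonneg x.2.2, sq_nonneg x.1, abs_nonneg M13, abs_nonneg M23,
      abs_nonneg M12, mul_nonneg (abs_nonneg M13) (sq_nonneg x.1),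
      mul_nonneg (abs_nonneg M23) (sq_nonneg x.1),
      mul_nonneg (abs_nonneg M12) (abs_nonneg x.2.2),
      mul_nonneg (abs_nonneg M13) (abs_nonneg x.2.2),
      mul_nonneg (abs_nonneg M23) (abs_nonneg x.2.2)]
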